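/- arXiv:2509.21654 — 4 statements merged into one kernel-verified Lean document; each statement's English description precedes it below -/
import Mathlib

section
/- For every total computable function A : ℕ → Option Bool such that (i) for all p and i, A (Nat.pair p i) = some true implies (eval (code p) i).Dom (the program denoted by p halts on input i), and (ii) for all p and i, A (Nat.pair p i) = some false implies ¬(eval (code p) i).Dom, there exists a natural number p such that (eval (code p) p).Dom (the program denoted by p halts on its own code as input), yet A (Nat.pair p p) ≠ some true (the system never outputs 'halts' on this instance). -/
open Nat.Partrec (Code)

/-! The system's verdict "halts" on the diagonal instances `(n, n)` is a computable predicate, so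
its complement is r.e. and some program `p` halts on input `n` exactly when the system does not
say "halts" on `(n, n)`. Run on its own code, `p` cannot be certified: a certificate would, by
safety, make `p` halt, while by construction it makes `p` diverge. Hence the system withholds
"halts" on `(p, p)`, and so `p` halts. -/

theorem REPred.exists_code_eval_dom_iff {p : ℕ → Prop} (hp : REPred p) :
    ∃ c : Code, ∀ n, (c.eval n).Dom ↔ p n := by
  have hf : Nat.Partrec fun n => (Part.assert (p n) fun _ => Part.some ()).map fun _ => 0 :=
    Partrec.nat_iff.mp (hp.map (Computable.const 0).to₂)
  obtain ⟨c, hc⟩ := Nat.Partrec.Code.exists_code.mp hf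
  exact ⟨c, fun n => by simp [hc, Part.assert]⟩

theorem ComputablePred.exists_eval_self_dom_iff_not {p : ℕ → Prop} (hp : ComputablePred p) :
    ∃ n, ((Denumerable.ofNat Code n).eval n).Dom ↔ ¬ p n := by
  obtain ⟨c, hc⟩ := hp.not.to_re.exists_code_eval_dom_iff
  exact ⟨Encodable.encode c, by rw [Denumerable.ofNat_encode, hc]⟩

theorem Computable.computablePred_diag_eq {β : Type*} [Primcodable β] [DecidableEq β]
    {A : ℕ → β} (hA : Computable A) (b : β) : ComputablePred fun n => A (Nat.pair n n) = b :=
  Computable.computablePred <| (Primrec.eq.comp Primrec.id (Primrec.const b)).decide.to_comp.comp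
    (hA.comp (Primrec₂.natPair.to_comp.comp Computable.id Computable.id))

theorem safe_wellbehaved_not_agi_halting_specific_general
    (A : ℕ → Option Bool) (hA : Computable A)
    (hSafeTrue : ∀ p i : ℕ, A (Nat.pair p i) = some true →
      ((Denumerable.ofNat Code p).eval i).Dom) :
    ∃ p : ℕ, ((Denumerable.ofNat Code p).eval p).Dom ∧
      A (Nat.pair p p) ≠ some true := by
  obtain ⟨p, hp⟩ := (hA.computablePred_diag_eq (some true)).exists_eval_self_dom_iff_not
  have hNotTrue : A (Nat.pair p p) ≠ some true := fun hTrue => hp.mp (hSafeTrue p p hTrue) hTrue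
  exact ⟨p, hp.mpr hNotTrue, hNotTrue⟩

/-- Any total computable (well-behaved) system `A : ℕ → Option Bool` that is safe
for the halting problem on specific program-input instances -- `some true` only on halting
instances and `some false` only on diverging instances -- must fail to certify some genuinely
halting self-referential instance: there is a `p` with `eval (code p) p` halting, yet
`A (Nat.pair p p) ≠ some true`. -/
theorem safe_wellbehaved_not_agi_halting_specific
    (A : ℕ → Option Bool) (hA : Computable A)
    (hSafeTrue : ∀ p i : ℕ, A (Nat.pair p i) = some true →
      ((Denumerable.ofNat Code p).eval i).Dom)
    (hSafeFalse : ∀ p i : ℕ, A (Nat.pair p i) = some false →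
      ¬ ((Denumerable.ofNat Code p).eval i).Dom) :
    ∃ p : ℕ, ((Denumerable.ofNat Code p).eval p).Dom ∧
      A (Nat.pair p p) ≠ some true :=
  safe_wellbehaved_not_agi_halting_specific_general A hA hSafeTrue
end

section
/- For every partial recursive function A : ℕ →. Bool such that for all natural numbers f, u, v: (i) whenever true ∈ A (Nat.pair f (Nat.pair u v)), the state v is reachable from the state u under the step relation of the code denoted by f (i.e., Relation.ReflTransGen (fun a b => b ∈ eval (code f) a) u v holds), and (ii) whenever false ∈ A (Nat.pair f (Nat.pair u v)), the state v is not reachable from u under that step relation, there exist natural numbers f, u, v such that the code denoted by f computes a total function, v is not reachable from u under the step relation of the code denoted by f, yet false ∉ A (Nat.pair f (Nat.pair u v)) (the system never outputs 'not reachable' on this planning instance). -/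
/-!
Reduce from the complement of the halting problem. For a code `c`, let the planning states be
step budgets: from state `a` move to the goal `0` if `c` halts on input `0` within `a` steps, and
to `a + 1` otherwise. This transition program is total, computable uniformly in `c`, and the goal
is reachable from `1` exactly when `c` halts. If a safe system answered `false` on every
unreachable instance with a total program, then running it on these instances would
semi-decide non-halting, which is impossible.
-/

open Nat.Partrec (Code)
open Nat.Partrec.Code

theorem Partrec.mem_re {α β : Type*} [Primcodable α] [Primcodable β] [DecidableEq β]
    {f : α →. β} (hf : Partrec f) (b : β) : REPred fun a => b ∈ f a := by
  have hg : Partrec fun a => (f a).bind fun y => bif y = b then Part.some () else Part.none :=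
    hf.bind <| Partrec.cond (Primrec.eq.comp Primrec.snd (Primrec.const b)).decide.to_comp
      (Computable.const ()).partrec Partrec.none
  refine hg.dom_re.of_eq fun a => ?_
  simp only [Part.dom_iff_mem, Part.mem_bind_iff]
  constructor
  · rintro ⟨_, y, hy, h⟩
    obtain rfl : y = b := by by_contra hne; simp [hne] at h
    exact hy
  · exact fun h => ⟨(), b, h, by simp⟩

theorem exists_computable_code_eval_eq_some {α : Type*} [Denumerable α] {g : α → ℕ → ℕ}
    (hg : Computable₂ g) :
    ∃ P : α → Code, Computable P ∧ ∀ x a, eval (P x) a = Part.some (g x a) := by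
  have hg' : Computable fun p : ℕ => g (Denumerable.ofNat α p.unpair.1) p.unpair.2 :=
    hg.comp ((Computable.ofNat α).comp (Computable.fst.comp Computable.unpair))
      (Computable.snd.comp Computable.unpair)
  obtain ⟨c, hc⟩ := exists_code.1 (Partrec.nat_iff.1 hg'.partrec)
  refine ⟨fun x => curry c (Encodable.encode x),
    (primrec₂_curry.comp (Primrec.const c) Primrec.encode).to_comp, fun x a => ?_⟩
  simp [eval_curry, hc]

def haltStep (c : Code) (n a : ℕ) : ℕ :=
  if (evaln a c n).isSome then 0 else a + 1

theorem computable₂_haltStep (n : ℕ) : Computable₂ fun c a => haltStep c n a := by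
  have h : Primrec fun p : Code × ℕ => (evaln p.2 p.1 n).isSome :=
    Primrec.option_isSome.comp <| primrec_evaln.comp <|
      (Primrec.snd.pair Primrec.fst).pair (Primrec.const n)
  exact (Primrec.cond h (Primrec.const 0) (Primrec.succ.comp Primrec.snd)).to_comp.of_eq
    fun p => by cases h : (evaln p.2 p.1 n).isSome <;> simp [haltStep, h]

theorem reflTransGen_haltStep_zero_of_evaln_isSome {c : Code} {n : ℕ} :
    ∀ j a, (evaln (a + j) c n).isSome →
      Relation.ReflTransGen (fun a b => b = haltStep c n a) a 0
  | 0, a, h => .single (if_pos h).symm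
  | j + 1, a, h => by
    by_cases ha : (evaln a c n).isSome
    · exact .single (if_pos ha).symm
    · exact .head (if_neg ha).symm
        (reflTransGen_haltStep_zero_of_evaln_isSome j (a + 1) (by rwa [Nat.add_right_comm]))

theorem reflTransGen_haltStep_one_zero_iff {c : Code} {n : ℕ} :
    Relation.ReflTransGen (fun a b => b = haltStep c n a) 1 0 ↔ (eval c n).Dom := by
  constructor
  · intro h
    obtain h | ⟨a, -, ha⟩ := Relation.ReflTransGen.cases_tail h
    · exact absurd h zero_ne_one
    · unfold haltStep at ha
      split at ha
      · obtain ⟨y, hy⟩ := Option.isSome_iff_exists.1 ‹_›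
        exact Part.dom_iff_mem.2 ⟨y, evaln_sound hy⟩
      · omega
  · intro h
    obtain ⟨k, hk⟩ := evaln_complete.1 (Part.get_mem h)
    refine reflTransGen_haltStep_zero_of_evaln_isSome k 1 ?_
    exact Option.isSome_iff_exists.2 ⟨_, evaln_mono (by omega) hk⟩

theorem safe_trusted_not_agi_planning_general
    (A : ℕ →. Bool) (hA : Partrec A)
    (hSafeFalse : ∀ f u v : ℕ, false ∈ A (Nat.pair f (Nat.pair u v)) →
      ¬ Relation.ReflTransGen (fun a b => b ∈ (Denumerable.ofNat Code f).eval a) u v) :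
    ∃ f u v : ℕ,
      (∀ n : ℕ, ((Denumerable.ofNat Code f).eval n).Dom) ∧
      ¬ Relation.ReflTransGen (fun a b => b ∈ (Denumerable.ofNat Code f).eval a) u v ∧
      false ∉ A (Nat.pair f (Nat.pair u v)) := by
  by_contra! hcomplete
  obtain ⟨P, hP, hPeval⟩ := exists_computable_code_eval_eq_some (computable₂_haltStep 0)
  have hreach (c : Code) : Relation.ReflTransGen
      (fun a b => b ∈ (Denumerable.ofNat Code (Encodable.encode (P c))).eval a) 1 0 ↔
      (eval c 0).Dom := by
    simpa [hPeval] using reflTransGen_haltStep_one_zero_iff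
  have hinst : Computable fun c => Nat.pair (Encodable.encode (P c)) (Nat.pair 1 0) :=
    Primrec₂.natPair.to_comp.comp (Computable.encode.comp hP) (Computable.const _)
  refine ComputablePred.halting_problem_not_re 0 <|
    ((hA.comp hinst).mem_re false).of_eq fun c => ?_
  exact ⟨fun hfalse hhalt => hSafeFalse _ _ _ hfalse ((hreach c).2 hhalt),
    fun hloop => hcomplete _ _ _ (by simp [hPeval]) (mt (hreach c).1 hloop)⟩

/-- Any partial recursive system `A` that is safe for planning -- on an encoded
instance `Nat.pair f (Nat.pair u v)` it outputs `true` only if state `v` is reachable from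
state `u` under the step relation of the code denoted by `f`, and `false` only if `v` is not
reachable from `u` -- must abstain on some unreachable instance whose transition program is
total: there are `f, u, v` with the code of `f` total and `v` not reachable from `u`, yet `A`
never outputs `false` ('not reachable') on this instance. -/
theorem safe_trusted_not_agi_planning
    (A : ℕ →. Bool) (hA : Partrec A)
    (hSafeTrue : ∀ f u v : ℕ, true ∈ A (Nat.pair f (Nat.pair u v)) →
      Relation.ReflTransGen (fun a b => b ∈ (Denumerable.ofNat Code f).eval a) u v)
    (hSafeFalse : ∀ f u v : ℕ, false ∈ A (Nat.pair f (Nat.pair u v)) →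
      ¬ Relation.ReflTransGen (fun a b => b ∈ (Denumerable.ofNat Code f).eval a) u v) :
    ∃ f u v : ℕ,
      (∀ n : ℕ, ((Denumerable.ofNat Code f).eval n).Dom) ∧
      ¬ Relation.ReflTransGen (fun a b => b ∈ (Denumerable.ofNat Code f).eval a) u v ∧
      false ∉ A (Nat.pair f (Nat.pair u v)) :=
  safe_trusted_not_agi_planning_general A hA hSafeFalse
end

section
/- For every total computable function A : ℕ → Option Bool such that for all natural numbers f, u, v: (i) A (Nat.pair f (Nat.pair u v)) = some true implies the state v is reachable from the state u under the step relation of the code denoted by f (i.e., Relation.ReflTransGen (fun a b => b ∈ eval (code f) a) u v holds), and (ii) A (Nat.pair f (Nat.pair u v)) = some false implies v is not reachable from u under that relation, there exist natural numbers f, u, v such that the code denoted by f computes a total function, v is reachable from u under the step relation of the code denoted by f, yet A (Nat.pair f (Nat.pair u v)) ≠ some true (the system never reports that a feasible plan exists for this instance). -/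
/-!
By Kleene's recursion theorem there is a total program `c` that, on every input `n`, steps to `0`
if `A` claims that `1` is reachable from `0` under `c`, and to `n + 1` otherwise. Were that claim
made, `c` would be constantly `0`, so only `0` would be reachable from `0`, contradicting safety.
Hence `A` does not make it, `c` is the successor map, and `1` is reachable from `0` in one step.
-/

open Nat.Partrec (Code)

theorem Relation.ReflTransGen.eq_of_forall_rel_eq {α : Type*} {r : α → α → Prop} {a b : α}
    (hr : ∀ x y, r x y → y = a) (h : Relation.ReflTransGen r a b) : b = a := by
  rcases h.cases_tail with rfl | ⟨c, -, hcb⟩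
  · rfl
  · exact hr c b hcb

def diagonalStep (A : ℕ → Option Bool) (c : Code) (n : ℕ) : ℕ :=
  if A (Nat.pair (Encodable.encode c) (Nat.pair 0 1)) = some true then 0 else n + 1

theorem computable₂_diagonalStep {A : ℕ → Option Bool} (hA : Computable A) :
    Computable₂ (diagonalStep A) := by
  have hclaim : Computable fun p : Code × ℕ =>
      decide (A (Nat.pair (Encodable.encode p.1) (Nat.pair 0 1)) = some true) :=
    Primrec.eq.decide.to_comp.comp
      (hA.comp (Primrec₂.natPair.to_comp.comp (Computable.encode.comp .fst) (.const _)))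
      (.const _)
  refine (Computable.cond hclaim (.const 0) (Computable.succ.comp .snd)).of_eq fun p => ?_
  unfold diagonalStep
  split_ifs with h <;> simp [h]

theorem exists_code_eval_eq_diagonalStep {A : ℕ → Option Bool} (hA : Computable A) :
    ∃ c : Code, c.eval = (diagonalStep A c : ℕ →. ℕ) :=
  Code.fixed_point₂ (computable₂_diagonalStep hA).partrec₂

theorem safe_wellbehaved_not_agi_planning_feasible_general
    (A : ℕ → Option Bool) (hA : Computable A)
    (hSafeTrue : ∀ f u v : ℕ, A (Nat.pair f (Nat.pair u v)) = some true →
      Relation.ReflTransGen (fun a b => b ∈ (Denumerable.ofNat Code f).eval a) u v) :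
    ∃ f u v : ℕ,
      (∀ n : ℕ, ((Denumerable.ofNat Code f).eval n).Dom) ∧
      Relation.ReflTransGen (fun a b => b ∈ (Denumerable.ofNat Code f).eval a) u v ∧
      A (Nat.pair f (Nat.pair u v)) ≠ some true := by
  obtain ⟨c, hc⟩ := exists_code_eval_eq_diagonalStep hA
  have hnot : A (Nat.pair (Encodable.encode c) (Nat.pair 0 1)) ≠ some true := by
    intro h
    have hreach := hSafeTrue _ 0 1 h
    simp only [Denumerable.ofNat_encode, hc, PFun.coe_val, Part.mem_some_iff, diagonalStep,
      h, if_true] at hreach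
    exact one_ne_zero (hreach.eq_of_forall_rel_eq fun _ _ => id)
  refine ⟨Encodable.encode c, 0, 1, fun n => ?_, ?_, hnot⟩
  · simp only [Denumerable.ofNat_encode, hc, PFun.coe_val, Part.some_dom]
  · refine .single ?_
    simp [Denumerable.ofNat_encode, hc, diagonalStep, hnot]

/-- Any total computable (well-behaved) system `A : ℕ → Option Bool` that is safe
for planning -- `some true` only on instances where the goal `v` is reachable from the start
`u` under the step relation of the code denoted by `f`, and `some false` only on instances
where it is not -- must fail to report a feasible plan on some reachable instance with a total
transition program: there are `f, u, v` with the code of `f` total and `v` reachable from `u`,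
yet `A (Nat.pair f (Nat.pair u v)) ≠ some true`. -/
theorem safe_wellbehaved_not_agi_planning_feasible
    (A : ℕ → Option Bool) (hA : Computable A)
    (hSafeTrue : ∀ f u v : ℕ, A (Nat.pair f (Nat.pair u v)) = some true →
      Relation.ReflTransGen (fun a b => b ∈ (Denumerable.ofNat Code f).eval a) u v)
    (hSafeFalse : ∀ f u v : ℕ, A (Nat.pair f (Nat.pair u v)) = some false →
      ¬ Relation.ReflTransGen (fun a b => b ∈ (Denumerable.ofNat Code f).eval a) u v) :
    ∃ f u v : ℕ,
      (∀ n : ℕ, ((Denumerable.ofNat Code f).eval n).Dom) ∧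
      Relation.ReflTransGen (fun a b => b ∈ (Denumerable.ofNat Code f).eval a) u v ∧
      A (Nat.pair f (Nat.pair u v)) ≠ some true :=
  safe_wellbehaved_not_agi_planning_feasible_general A hA hSafeTrue
end

section
/- There exists a constant c : ℕ such that for every code a (for a partial recursive function) and every natural number T, if a is sound for T-step-bounded non-halting in the sense that for all natural numbers p and i, whenever 0 ∈ eval a (Nat.pair p i), the code denoted by p does not halt on input i within T steps (i.e., Nat.Partrec.Code.evaln T (code p) i = none), then there exists a natural number p such that the code denoted by p does not halt on input p within T steps, yet for every k with k + c ≤ T, Nat.Partrec.Code.evaln k a (Nat.pair p p) ≠ some 0 (the system a, run for at most T − c steps, never outputs 'does not halt in the given time limit' on this instance). -/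
/-!
Given the system `a`, let `d` run `a` on `⟨n, n⟩` and halt exactly when `a` answers `0`, and
let `p` be the code of `d`. If `d` halted on `p` within `T` steps, `a` would answer `0` on
`⟨p, p⟩`, and safety would then say that `d` does *not* halt on `p` within `T` steps; so it does
not, and that argument is the constant-size proof. Conversely, a run of `a` answering `0` within
`k` steps makes `d` halt within the same `k` steps, so by monotonicity of fuel `a` never answers
`0` within `k ≤ T` steps: for Mathlib's `evaln` the constant is `c = 0`.
-/

open Nat.Partrec (Code)

namespace Nat.Partrec.Code

/-- Searches for `m` with `left ⟨v, m⟩ = 0`, which succeeds (with `m = 0`) iff `v = 0`. -/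
def haltIfZero : Code := (rfind' left).comp (Code.id.pair zero)

theorem eq_zero_of_mem_eval_haltIfZero {v x : ℕ} (h : x ∈ haltIfZero.eval v) : v = 0 := by
  simp only [haltIfZero, eval, Seq.seq, eval_id, Part.map_eq_map, Part.map_some, Part.bind_some,
    PFun.coe_val, Nat.unpair_pair, Part.bind_eq_bind, Part.bind_map, Nat.unpaired,
    Part.mem_bind_iff, Part.mem_map_iff] at h
  obtain ⟨_, -, m, hm, -⟩ := h
  simpa using Nat.rfind_spec hm

theorem evaln_haltIfZero (k : ℕ) : evaln (k + 1) haltIfZero 0 = some 0 := by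
  simp [haltIfZero, evaln, Seq.seq, Code.id, show Nat.pair 0 0 = 0 from rfl]

theorem eval_comp_id_pair_id (a : Code) (n : ℕ) :
    (a.comp (Code.id.pair Code.id)).eval n = a.eval (Nat.pair n n) := by
  simp only [eval, Seq.seq, eval_id, Part.map_eq_map, Part.map_some, Part.bind_some]
  exact Part.bind_some _ _

def diagonal (a : Code) : Code := haltIfZero.comp (a.comp (Code.id.pair Code.id))

theorem mem_eval_of_mem_eval_diagonal {a : Code} {n x : ℕ} (h : x ∈ (diagonal a).eval n) :
    0 ∈ a.eval (Nat.pair n n) := by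
  obtain ⟨v, hv, hx⟩ := Part.mem_bind_iff.1 h
  rwa [eq_zero_of_mem_eval_haltIfZero hx, eval_comp_id_pair_id] at hv

theorem evaln_diagonal_of_evaln {a : Code} {k n : ℕ} (h : evaln k a (Nat.pair n n) = some 0) :
    evaln k (diagonal a) n = some 0 := by
  obtain ⟨k, rfl⟩ : ∃ k', k = k' + 1 :=
    Nat.exists_eq_succ_of_ne_zero (by rintro rfl; simp [evaln] at h)
  have hn : Nat.pair n n ≤ k := Nat.lt_succ_iff.1 (evaln_bound h)
  simp [diagonal, evaln, Seq.seq, Code.id, (Nat.left_le_pair n n).trans hn, h, evaln_haltIfZero]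

theorem evaln_diagonal_eq_none {a : Code} {T n : ℕ}
    (h : 0 ∈ a.eval (Nat.pair n n) → evaln T (diagonal a) n = Option.none) :
    evaln T (diagonal a) n = Option.none := by
  cases hd : evaln T (diagonal a) n with
  | none => rfl
  | some x => exact hd ▸ h (mem_eval_of_mem_eval_diagonal (evaln_sound hd))

theorem evaln_ne_some_zero_of_evaln_diagonal_eq_none {a : Code} {T k n : ℕ}
    (h : evaln T (diagonal a) n = Option.none) (hk : k ≤ T) :
    evaln k a (Nat.pair n n) ≠ some 0 := by
  intro ha
  have : 0 ∈ evaln T (diagonal a) n := evaln_mono hk (evaln_diagonal_of_evaln ha)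
  simp [h] at this

end Nat.Partrec.Code

open Nat.Partrec.Code

/-- There is a constant `c` such that for every code `a` (the AI system) and every
time limit `T`, if `a` is sound for `T`-step-bounded non-halting (whenever `0 ∈ eval a
(Nat.pair p i)`, the code denoted by `p` does not halt on `i` within `T` steps), then there is
a `p` whose code does not halt on input `p` within `T` steps, yet `a`, run for any time budget
`k` with `k + c ≤ T`, never outputs `0` ('does not halt in the given time limit') on the
instance `Nat.pair p p`. -/
theorem safe_trusted_not_agi_time_bounded_halting :
    ∃ c : ℕ, ∀ (a : Code) (T : ℕ),
      (∀ p i : ℕ, 0 ∈ a.eval (Nat.pair p i) →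
        Nat.Partrec.Code.evaln T (Denumerable.ofNat Code p) i = none) →
      ∃ p : ℕ,
        Nat.Partrec.Code.evaln T (Denumerable.ofNat Code p) p = none ∧
        ∀ k : ℕ, k + c ≤ T →
          Nat.Partrec.Code.evaln k a (Nat.pair p p) ≠ some 0 := by
  refine ⟨0, fun a T hsafe => ?_⟩
  have hcode : Denumerable.ofNat Code (Encodable.encode (diagonal a)) = diagonal a :=
    Denumerable.ofNat_encode _
  have hdiv : evaln T (diagonal a) (Encodable.encode (diagonal a)) = none :=
    evaln_diagonal_eq_none fun h0 => by simpa only [hcode] using hsafe _ _ h0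
  exact ⟨Encodable.encode (diagonal a), by rwa [hcode],
    fun k hk => evaln_ne_some_zero_of_evaln_diagonal_eq_none hdiv hk⟩
end
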